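/- Let l ∈ ℕ and let Δ ∈ ℝ^{l×l} be any matrix. Then there exists D ∈ 𝒴_l attaining the infimum inf_{D′ ∈ 𝒴_l} ‖D′ − Δ‖_F; that is, the set Min(Δ) of globally minimizing EDM-1 matrices for Δ is nonempty. -/

import Mathlib

/-- The set of `l × l` EDM-1 matrices of embedding dimension at most one:
matrices of pairwise distances of `l` points on the real line. -/
def EDM1 (l : ℕ) : Set (Matrix (Fin l) (Fin l) ℝ) :=
  { D | ∃ z : Fin l → ℝ, ∀ i j, D i j = |z i - z j| }

/-- The Frobenius norm of a real matrix. -/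
noncomputable def frobNorm {l : ℕ} (M : Matrix (Fin l) (Fin l) ℝ) : ℝ :=
  Real.sqrt (∑ i, ∑ j, (M i j) ^ 2)

/-- The set of globally minimizing EDM-1 matrices for the dissimilarity matrix
`Δ`: the EDM-1 matrices closest to `Δ` in Frobenius norm. -/
noncomputable def MinSet (l : ℕ) (Δ : Matrix (Fin l) (Fin l) ℝ) :
    Set (Matrix (Fin l) (Fin l) ℝ) :=
  { D ∈ EDM1 l | frobNorm (D - Δ) = ⨅ D' : EDM1 l, frobNorm ((D' : Matrix (Fin l) (Fin l) ℝ) - Δ) }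

/-!
The raw-stress objective `D ↦ ‖D - Δ‖_F` is continuous, and every EDM-1 matrix doing at least as
well as the zero matrix has all entries at most `2‖Δ‖_F`. Such a matrix is the distance matrix of
points on the line that, translated so that one of them sits at the origin, lie in `[-2‖Δ‖_F, 2‖Δ‖_F]`.
So it suffices to minimize over the compact image of a ball of configurations, which contains `0`.
-/

open Metric

theorem exists_isMinOn_of_isCompact_of_sublevel {α β : Type*} [LinearOrder α] [TopologicalSpace α]
    [ClosedIicTopology α] [TopologicalSpace β] {f : β → α} {s K : Set β} {x₀ : β}
    (hK : IsCompact K) (hKs : K ⊆ s) (hf : ContinuousOn f K) (hx₀ : x₀ ∈ K)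
    (hsub : ∀ y ∈ s, f y ≤ f x₀ → y ∈ K) : ∃ x ∈ s, IsMinOn f s x := by
  obtain ⟨x, hxK, hmin⟩ := hK.exists_isMinOn ⟨x₀, hx₀⟩ hf
  refine ⟨x, hKs hxK, fun y hy => ?_⟩
  by_cases hy₀ : f y ≤ f x₀
  · exact hmin (hsub y hy hy₀)
  · exact (hmin hx₀).trans (le_of_not_ge hy₀)

section distMatrix

variable {ι : Type*}

def distMatrix (z : ι → ℝ) : Matrix ι ι ℝ := fun i j => |z i - z j|

theorem continuous_distMatrix : Continuous (distMatrix : (ι → ℝ) → Matrix ι ι ℝ) :=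
  continuous_pi fun i => continuous_pi fun j =>
    ((continuous_apply i).sub (continuous_apply j)).abs

theorem distMatrix_sub_const (z : ι → ℝ) (c : ℝ) :
    distMatrix (fun i => z i - c) = distMatrix z := by
  funext i j
  simp only [distMatrix, sub_sub_sub_cancel_right]

theorem distMatrix_zero : distMatrix (0 : ι → ℝ) = 0 := by
  funext i j
  simp [distMatrix]

end distMatrix

theorem EDM1_eq_range (l : ℕ) : EDM1 l = Set.range distMatrix := by
  ext D
  constructor
  · rintro ⟨z, hz⟩
    exact ⟨z, funext fun i => funext fun j => (hz i j).symm⟩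
  · rintro ⟨z, rfl⟩
    exact ⟨z, fun _ _ => rfl⟩

theorem mem_image_closedBall_of_mem_EDM1 {l : ℕ} {R : ℝ} (hR : 0 ≤ R)
    {D : Matrix (Fin l) (Fin l) ℝ} (hD : D ∈ EDM1 l) (hbound : ∀ i j, D i j ≤ R) :
    D ∈ distMatrix '' closedBall 0 R := by
  obtain ⟨z, rfl⟩ := (EDM1_eq_range l).subset hD
  rcases isEmpty_or_nonempty (Fin l) with hl | ⟨⟨i₀⟩⟩
  · exact ⟨0, mem_closedBall_self hR, Subsingleton.elim _ _⟩
  · refine ⟨fun i => z i - z i₀, ?_, distMatrix_sub_const z (z i₀)⟩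
    rw [mem_closedBall_zero_iff, pi_norm_le_iff_of_nonneg hR]
    exact fun i => hbound i i₀

theorem continuous_frobNorm (l : ℕ) : Continuous (frobNorm : Matrix (Fin l) (Fin l) ℝ → ℝ) :=
  Real.continuous_sqrt.comp <| continuous_finsetSum _ fun i _ =>
    continuous_finsetSum _ fun j _ => ((continuous_apply j).comp (continuous_apply i)).pow 2

theorem frobNorm_neg {l : ℕ} (M : Matrix (Fin l) (Fin l) ℝ) : frobNorm (-M) = frobNorm M := by
  simp only [frobNorm, Matrix.neg_apply, neg_sq]

theorem abs_apply_le_frobNorm {l : ℕ} (M : Matrix (Fin l) (Fin l) ℝ) (i j : Fin l) :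
    |M i j| ≤ frobNorm M := by
  rw [← Real.sqrt_sq_eq_abs]
  apply Real.sqrt_le_sqrt
  calc M i j ^ 2 ≤ ∑ j', M i j' ^ 2 :=
        Finset.single_le_sum (fun _ _ => sq_nonneg _) (Finset.mem_univ j)
    _ ≤ ∑ i', ∑ j', M i' j' ^ 2 :=
        Finset.single_le_sum (f := fun i' => ∑ j', M i' j' ^ 2)
          (fun _ _ => Finset.sum_nonneg fun _ _ => sq_nonneg _) (Finset.mem_univ i)

theorem apply_le_of_frobNorm_sub_le {l : ℕ} {D Δ : Matrix (Fin l) (Fin l) ℝ}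
    (h : frobNorm (D - Δ) ≤ frobNorm Δ) (i j : Fin l) : D i j ≤ 2 * frobNorm Δ := by
  have hDΔ := abs_apply_le_frobNorm (D - Δ) i j
  have hΔ := abs_apply_le_frobNorm Δ i j
  rw [Matrix.sub_apply] at hDΔ
  linarith [le_abs_self (D i j - Δ i j), le_abs_self (Δ i j)]

/-- Existence of raw-stress minimizers: for any matrix `Δ ∈ ℝ^{l×l}` there is an
EDM-1 matrix attaining the infimum of the Frobenius distance to `Δ` over `𝒴_l`;
i.e. `Min(Δ)` is nonempty. -/
theorem MinSet_nonempty (l : ℕ) (Δ : Matrix (Fin l) (Fin l) ℝ) :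
    (MinSet l Δ).Nonempty := by
  set R := 2 * frobNorm Δ
  have hR : 0 ≤ R := mul_nonneg zero_le_two (Real.sqrt_nonneg _)
  obtain ⟨D, hD, hmin⟩ := exists_isMinOn_of_isCompact_of_sublevel (f := fun D => frobNorm (D - Δ))
    ((isCompact_closedBall 0 R).image continuous_distMatrix)
    (by rw [EDM1_eq_range]; exact Set.image_subset_range _ _)
    ((continuous_frobNorm l).comp (continuous_sub_right Δ)).continuousOn
    ⟨0, mem_closedBall_self hR, distMatrix_zero⟩
    (fun D hD hle => mem_image_closedBall_of_mem_EDM1 hR hD fun i j =>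
      apply_le_of_frobNorm_sub_le (by simpa [distMatrix_zero, frobNorm_neg] using hle) i j)
  exact ⟨D, hD, (hmin.iInf_eq hD).symm⟩
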